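/- Let k be a field, Q a strongly locally finite quiver, and Q' a full subquiver of Q. Let M, N be representations in Rep^-(Q) such that M ⊕ N is supported by Q' and injective restricted to a full subquiver Σ of Q', and let Ω be a successor-closed subquiver of Q' which contains the socle-support of (M ⊕ N)_Σ and the augmented complement of Σ in Q'. Then: (1) M ≅ N if and only if M_Ω ≅ N_Ω; (2) M is indecomposable if and only if M_Ω is indecomposable; (3) a morphism f: M → N is a section (resp. a retraction) if and only if f_Ω: M_Ω → N_Ω is a section (resp. a retraction). -/

import Mathlib

open CategoryTheory CategoryTheory.Limits

/-- A quiver is strongly locally finite if it is locally finite (finitely many arrows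
starting and ending at every vertex) and interval-finite (finitely many paths between
any two vertices). -/
def StronglyLocallyFinite (Q : Type) [Quiver.{0} Q] : Prop :=
  (∀ x : Q, Finite (Σ y : Q, x ⟶ y)) ∧
  (∀ y : Q, Finite (Σ x : Q, x ⟶ y)) ∧
  (∀ x y : Q, Finite (Quiver.Path x y))

variable (k : Type) [Field k] (Q : Type) [Quiver.{0} Q]

/-- The category `Rep(Q)` of `k`-representations of `Q`, i.e. functors from the
path category of `Q` to `k`-vector spaces. -/
abbrev RepQ := Paths Q ⥤ ModuleCat.{0} k

instance : HasFiniteBiproducts (RepQ k Q) := Abelian.hasFiniteBiproducts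

variable {Q}

/-- A vertex of `Q`, seen as an object of the path category. -/
abbrev vtx (x : Q) : Paths Q := x

/-- An arrow of `Q`, seen as a morphism of the path category. -/
abbrev arr {x y : Q} (e : x ⟶ y) : vtx x ⟶ vtx y := e.toPath

/-- A path of `Q`, seen as a morphism of the path category. -/
abbrev pth {x y : Q} (p : Quiver.Path x y) : vtx x ⟶ vtx y := p

universe uC vC

/-- Natural transformations between functors lifted from prefunctors are determined
by vertexwise data commuting with the arrow maps. -/
def liftNatTrans {C : Type uC} [Category.{vC} C] {φ ψ : Q ⥤q C}
    (app : ∀ x : Q, φ.obj x ⟶ ψ.obj x)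
    (h : ∀ {x y : Q} (e : x ⟶ y), φ.map e ≫ app y = app x ≫ ψ.map e) :
    Paths.lift φ ⟶ Paths.lift ψ where
  app x := app x
  naturality x y p := by
    induction p using Paths.induction_fixed_source with
    | id => exact (Category.id_comp _).trans (Category.comp_id _).symm
    | comp p e ih =>
      rw [Functor.map_comp, Functor.map_comp]
      erw [Category.assoc, Paths.of_map, Paths.lift_toPath, Paths.lift_toPath, h e]
      erw [← Category.assoc, ih, Category.assoc]
      rfl

variable (Q) in
/-- The prefunctor underlying the indecomposable projective representation `P_a`. -/
noncomputable def projPre (a : Q) : Q ⥤q ModuleCat.{0} k where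
  obj x := ModuleCat.of k (Quiver.Path a x →₀ k)
  map {x y} e := ModuleCat.ofHom (Finsupp.lmapDomain k k (fun ρ => ρ.cons e))

variable (Q) in
/-- The indecomposable projective representation `P_a`: the value at `x` is the
`k`-vector space with basis the set of paths from `a` to `x`, and an arrow acts by
composition of paths. -/
noncomputable def projRep (a : Q) : RepQ k Q := Paths.lift (projPre k Q a)

variable (Q) in
/-- The prefunctor underlying the indecomposable injective representation `I_a`. -/
noncomputable def injPre (a : Q) : Q ⥤q ModuleCat.{0} k where
  obj x := ModuleCat.of k (Quiver.Path x a → k)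
  map {x y} e := ModuleCat.ofHom (LinearMap.funLeft k k (fun σ : Quiver.Path y a => (Quiver.Hom.toPath e).comp σ))

variable (Q) in
/-- The indecomposable injective representation `I_a`: the value at `x` is the
`k`-vector space with basis the set of paths from `x` to `a` (realised as the dual-style
function space `Quiver.Path x a → k`, which is the same as the span of the paths since `Q`
is interval-finite); the arrow `α : x ⟶ y` sends a path `ρα` to `ρ` and kills the paths
not factoring through `α`. -/
noncomputable def injRep (a : Q) : RepQ k Q := Paths.lift (injPre k Q a)

variable (Q) in
/-- The representation with value `k` everywhere, all arrows acting as the identity. -/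
noncomputable def unitRep : RepQ k Q :=
  Paths.lift { obj := fun _ => ModuleCat.of k k, map := fun _ => ModuleCat.ofHom LinearMap.id }

variable (Q) in
/-- The prefunctor underlying the simple representation `S_a`. -/
noncomputable def simplePre (a : Q) : Q ⥤q ModuleCat.{0} k where
  obj x := ModuleCat.of k (PLift (x = a) → k)
  map _ := 0

variable (Q) in
/-- The simple representation `S_a` concentrated at the vertex `a`. -/
noncomputable def simpleRep (a : Q) : RepQ k Q := Paths.lift (simplePre k Q a)

/-- The representation `M ⊗_k V` obtained by tensoring vertexwise with a `k`-space `V`. -/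
noncomputable def tensorRep (M : RepQ k Q) (V : ModuleCat.{0} k) : RepQ k Q :=
  M ⋙ MonoidalCategory.tensorRight V

open Classical in
/-- Auxiliary linear map used to define restrictions of representations. -/
noncomputable def piCondMap {A B : Type} [AddCommGroup A] [Module k A] [AddCommGroup B]
    [Module k B] (φ : A →ₗ[k] B) (P P' : Prop) : (PLift P → A) →ₗ[k] (PLift P' → B) where
  toFun f _ := if h : P then φ (f ⟨h⟩) else 0
  map_add' f g := by funext _; dsimp; split <;> simp
  map_smul' c f := by funext _; dsimp; split <;> simp

variable (Q) in
/-- The prefunctor underlying the restriction of `M` to the full subquiver generated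
by a set `S` of vertices. -/
noncomputable def restrictPre (M : RepQ k Q) (S : Set Q) : Q ⥤q ModuleCat.{0} k where
  obj x := ModuleCat.of k (PLift (x ∈ S) → M.obj (vtx x))
  map {x y} e := ModuleCat.ofHom (piCondMap k (M.map (arr e)).hom (x ∈ S) (y ∈ S))

variable (Q) in
/-- The restriction `M_S` of a representation `M` to the full subquiver generated by a
set `S` of vertices: the value at `x ∈ S` is `M(x)`, the value elsewhere is `0`, arrows
with both ends in `S` act as in `M` and the other arrows act as zero. -/
noncomputable def restrictRep (M : RepQ k Q) (S : Set Q) : RepQ k Q :=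
  Paths.lift (restrictPre k Q M S)

variable (Q) in
/-- The restriction `f_S` of a morphism of representations to the full subquiver
generated by a set `S` of vertices. -/
noncomputable def restrictHom {M N : RepQ k Q} (f : M ⟶ N) (S : Set Q) :
    restrictRep k Q M S ⟶ restrictRep k Q N S :=
  liftNatTrans (fun x => ModuleCat.ofHom (LinearMap.compLeft (f.app (vtx x)).hom (PLift (x ∈ S)))) (by
    intro x y e
    ext g
    funext hy
    show (LinearMap.compLeft (f.app (vtx y)).hom (PLift (y ∈ S)))
        (piCondMap k (M.map (arr e)).hom (x ∈ S) (y ∈ S) g) hy =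
      (piCondMap k (N.map (arr e)).hom (x ∈ S) (y ∈ S))
        (LinearMap.compLeft (f.app (vtx x)).hom (PLift (x ∈ S)) g) hy
    by_cases hx : x ∈ S
    · simp only [piCondMap, LinearMap.compLeft, LinearMap.coe_mk, AddHom.coe_mk, dif_pos hx]
      exact congrArg (fun φ => ModuleCat.Hom.hom φ (g ⟨hx⟩)) (f.naturality (arr e))
    · simp [piCondMap, LinearMap.compLeft, dif_neg hx]
      exact (f.app (vtx y)).hom.map_zero)

variable (Q) in
/-- A subrepresentation of a representation, given by a family of subspaces stable
under the arrow maps. -/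
structure SubRep (M : RepQ k Q) : Type where
  carrier : ∀ x : Q, Submodule k (M.obj (vtx x))
  stable : ∀ {x y : Q} (e : x ⟶ y) (v : M.obj (vtx x)),
    v ∈ carrier x → M.map (arr e) v ∈ carrier y

variable (Q) in
/-- The socle of `M` at a vertex: the intersection of the kernels of the maps
associated to the arrows starting there. -/
def socle (M : RepQ k Q) (x : Q) : Submodule k (M.obj (vtx x)) :=
  ⨅ (y : Q) (e : x ⟶ y), LinearMap.ker (M.map (arr e)).hom

variable (Q) in
/-- The radical of `M` at a vertex: the sum of the images of the maps associated to the
arrows ending there. -/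
def radical (M : RepQ k Q) (x : Q) : Submodule k (M.obj (vtx x)) :=
  ⨆ (y : Q) (e : y ⟶ x), LinearMap.range (M.map (arr e)).hom

variable (Q) in
/-- The support of a representation: the set of vertices with nonzero value. -/
def suppR (M : RepQ k Q) : Set Q := {x : Q | Nontrivial (M.obj (vtx x))}

variable (Q) in
/-- A representation is locally finite dimensional if all its vertex spaces are
finite dimensional; these form the category `rep(Q)`. -/
def LocFinDim (M : RepQ k Q) : Prop := ∀ x : Q, FiniteDimensional k (M.obj (vtx x))

variable (Q) in
/-- A representation is finite dimensional if the total dimension `Σ_x dim M(x)` is finite,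
i.e. it is locally finite dimensional with finite support. -/
def FinDimRep (M : RepQ k Q) : Prop := (suppR k Q M).Finite ∧ LocFinDim k Q M

variable (Q) in
/-- The socle of `M` is an essential subrepresentation of `M`. -/
def SocleEssential (M : RepQ k Q) : Prop :=
  ∀ N : SubRep k Q M, (∃ x, N.carrier x ≠ ⊥) → ∃ x, N.carrier x ⊓ socle k Q M x ≠ ⊥

variable (Q) in
/-- The socle of `M` is finitely supported. -/
def SocleFinSupported (M : RepQ k Q) : Prop := {x : Q | socle k Q M x ≠ ⊥}.Finite

variable (Q) in
/-- The radical of `M` is a superfluous subrepresentation of `M`,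
i.e. the top of `M` is essential over `M`. -/
def TopEssential (M : RepQ k Q) : Prop :=
  ∀ N : SubRep k Q M, (∀ x, N.carrier x ⊔ radical k Q M x = ⊤) → ∀ x, N.carrier x = ⊤

variable (Q) in
/-- The top of `M` is finitely supported. -/
def TopFinSupported (M : RepQ k Q) : Prop := {x : Q | radical k Q M x ≠ ⊤}.Finite

variable (Q) in
/-- Membership in `Inj(Q)`: the full additive subcategory of `Rep(Q)` generated by the
representations `I_a ⊗ V` with `a` a vertex and `V` a `k`-space. -/
def MemInj (M : RepQ k Q) : Prop :=
  ∃ (n : ℕ) (a : Fin n → Q) (V : Fin n → ModuleCat.{0} k),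
    Nonempty (M ≅ ⨁ (fun i => tensorRep k (injRep k Q (a i)) (V i)))

variable (Q) in
/-- Membership in `Proj(Q)`: the full additive subcategory of `Rep(Q)` generated by the
representations `P_a ⊗ V` with `a` a vertex and `V` a `k`-space. -/
def MemProj (M : RepQ k Q) : Prop :=
  ∃ (n : ℕ) (a : Fin n → Q) (V : Fin n → ModuleCat.{0} k),
    Nonempty (M ≅ ⨁ (fun i => tensorRep k (projRep k Q (a i)) (V i)))

variable (Q) in
/-- Membership in `inj(Q)`: the locally finite dimensional representations in `Inj(Q)`. -/
def MemInjL (M : RepQ k Q) : Prop := MemInj k Q M ∧ LocFinDim k Q M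

variable (Q) in
/-- Membership in `proj(Q)`: the locally finite dimensional representations in `Proj(Q)`. -/
def MemProjL (M : RepQ k Q) : Prop := MemProj k Q M ∧ LocFinDim k Q M

variable (Q) in
/-- A representation is almost finitely presented if it admits a projective resolution
`0 → P₁ → P₀ → M → 0` with `P₀, P₁ ∈ Proj(Q)`. -/
def AlmostFinPresented (M : RepQ k Q) : Prop :=
  ∃ (P₁ P₀ : RepQ k Q) (f : P₁ ⟶ P₀) (g : P₀ ⟶ M) (w : f ≫ g = 0),
    MemProj k Q P₁ ∧ MemProj k Q P₀ ∧ (ShortComplex.mk f g w).ShortExact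

variable (Q) in
/-- A representation is almost finitely co-presented if it admits an injective
co-resolution `0 → M → I₀ → I₁ → 0` with `I₀, I₁ ∈ Inj(Q)`. -/
def AlmostFinCopresented (M : RepQ k Q) : Prop :=
  ∃ (I₀ I₁ : RepQ k Q) (f : M ⟶ I₀) (g : I₀ ⟶ I₁) (w : f ≫ g = 0),
    MemInj k Q I₀ ∧ MemInj k Q I₁ ∧ (ShortComplex.mk f g w).ShortExact

variable (Q) in
/-- A representation is finitely presented if it admits a projective resolution
`0 → P₁ → P₀ → M → 0` with `P₀, P₁ ∈ proj(Q)`; these form the category `rep^+(Q)`. -/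
def FinPresented (M : RepQ k Q) : Prop :=
  ∃ (P₁ P₀ : RepQ k Q) (f : P₁ ⟶ P₀) (g : P₀ ⟶ M) (w : f ≫ g = 0),
    MemProjL k Q P₁ ∧ MemProjL k Q P₀ ∧ (ShortComplex.mk f g w).ShortExact

variable (Q) in
/-- A representation is finitely co-presented if it admits an injective co-resolution
`0 → M → I₀ → I₁ → 0` with `I₀, I₁ ∈ inj(Q)`; these form the category `rep^-(Q)`. -/
def FinCopresented (M : RepQ k Q) : Prop :=
  ∃ (I₀ I₁ : RepQ k Q) (f : M ⟶ I₀) (g : I₀ ⟶ I₁) (w : f ≫ g = 0),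
    MemInjL k Q I₀ ∧ MemInjL k Q I₁ ∧ (ShortComplex.mk f g w).ShortExact

variable (Q) in
/-- A right infinite path with all vertices in `S`. -/
def HasRightInfPathIn (S : Set Q) : Prop :=
  ∃ (p : ℕ → Q) (_ : ∀ n, p n ⟶ p (n + 1)), ∀ n, p n ∈ S

variable (Q) in
/-- A left infinite path with all vertices in `S`. -/
def HasLeftInfPathIn (S : Set Q) : Prop :=
  ∃ (p : ℕ → Q) (_ : ∀ n, p (n + 1) ⟶ p n), ∀ n, p n ∈ S

/-- The list of vertices visited by a path. -/
def pathVerts {V : Type*} [Quiver V] {x : V} : ∀ {y : V}, Quiver.Path x y → List V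
  | _, Quiver.Path.nil => [x]
  | y, Quiver.Path.cons p _ => pathVerts p ++ [y]

variable (Q) in
/-- The full subquiver generated by `S` is socle-finite: every vertex of `S` is a
predecessor (within `S`) of one of finitely many fixed vertices. -/
def SetSocleFinite (S : Set Q) : Prop :=
  ∃ T : Finset Q, ∀ x ∈ S, ∃ t ∈ T, ∃ p : Quiver.Path x t, ∀ z ∈ pathVerts p, z ∈ S

variable (Q) in
/-- The full subquiver generated by `S` is top-finite: every vertex of `S` is a
successor (within `S`) of one of finitely many fixed vertices. -/
def SetTopFinite (S : Set Q) : Prop :=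
  ∃ T : Finset Q, ∀ x ∈ S, ∃ t ∈ T, ∃ p : Quiver.Path t x, ∀ z ∈ pathVerts p, z ∈ S

section AlmostSplit

universe uD vD
variable {C : Type uD} [Category.{vD} C]

/-- A morphism is a section if it admits a left inverse. -/
def IsSect {X Y : C} (f : X ⟶ Y) : Prop := ∃ r : Y ⟶ X, f ≫ r = 𝟙 X

/-- A morphism is a retraction if it admits a right inverse. -/
def IsRetr {X Y : C} (f : X ⟶ Y) : Prop := ∃ s : Y ⟶ X, s ≫ f = 𝟙 Y

/-- A morphism `g : Y ⟶ Z` is right almost split relative to the object class `P` if it is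
not a retraction and every non-retraction `h : W ⟶ Z` with `W` in `P` factors through `g`. -/
def RightAS (P : C → Prop) {Y Z : C} (g : Y ⟶ Z) : Prop :=
  ¬ IsRetr g ∧ ∀ ⦃W : C⦄, P W → ∀ h : W ⟶ Z, ¬ IsRetr h → ∃ u : W ⟶ Y, u ≫ g = h

/-- A morphism `f : X ⟶ Y` is left almost split relative to the object class `P` if it is
not a section and every non-section `h : X ⟶ W` with `W` in `P` factors through `f`. -/
def LeftAS (P : C → Prop) {X Y : C} (f : X ⟶ Y) : Prop :=
  ¬ IsSect f ∧ ∀ ⦃W : C⦄, P W → ∀ h : X ⟶ W, ¬ IsSect h → ∃ u : Y ⟶ W, f ≫ u = h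

/-- A morphism `g : Y ⟶ Z` is right minimal. -/
def RightMin {Y Z : C} (g : Y ⟶ Z) : Prop := ∀ u : Y ⟶ Y, u ≫ g = g → IsIso u

/-- A morphism `f : X ⟶ Y` is left minimal. -/
def LeftMin {X Y : C} (f : X ⟶ Y) : Prop := ∀ u : Y ⟶ Y, f ≫ u = f → IsIso u

/-- Minimal right almost split relative to the object class `P`. -/
def MinRightAS (P : C → Prop) {Y Z : C} (g : Y ⟶ Z) : Prop := RightAS P g ∧ RightMin g

/-- Minimal left almost split relative to the object class `P`. -/
def MinLeftAS (P : C → Prop) {X Y : C} (f : X ⟶ Y) : Prop := LeftAS P f ∧ LeftMin f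

/-- An object is indecomposable if it is nonzero and its only idempotent endomorphisms
are `0` and the identity (equivalently, it is not a direct sum of two nonzero objects). -/
def Indec [Limits.HasZeroMorphisms C] (X : C) : Prop :=
  ¬ Limits.IsZero X ∧ ∀ e : X ⟶ X, e ≫ e = e → e = 0 ∨ e = 𝟙 X

/-- A morphism is irreducible relative to the object class `P` if it is neither a section
nor a retraction while in any factorization through an object of `P` the first factor is a
section or the second factor is a retraction. -/
def IrredOn (P : C → Prop) {X Y : C} (f : X ⟶ Y) : Prop :=
  ¬ IsSect f ∧ ¬ IsRetr f ∧
    ∀ ⦃Z : C⦄, P Z → ∀ (g : X ⟶ Z) (h : Z ⟶ Y), g ≫ h = f → IsSect g ∨ IsRetr h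

/-- An object `M` is projective relative to the object class `P`: any morphism from `M` to
the codomain of an epimorphism between objects of `P` lifts. -/
def ProjOn (P : C → Prop) (M : C) : Prop :=
  ∀ ⦃A B : C⦄, P A → P B → ∀ (g : A ⟶ B), Epi g → ∀ h : M ⟶ B, ∃ l : M ⟶ A, l ≫ g = h

/-- An object `M` is injective relative to the object class `P`: any morphism to `M` from
the domain of a monomorphism between objects of `P` extends. -/
def InjOn (P : C → Prop) (M : C) : Prop :=
  ∀ ⦃A B : C⦄, P A → P B → ∀ (g : A ⟶ B), Mono g → ∀ h : A ⟶ M, ∃ l : B ⟶ M, g ≫ l = h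

/-- An essential monomorphism, relative to the object class `P`. -/
def EssMonoOn (P : C → Prop) {X Y : C} (f : X ⟶ Y) : Prop :=
  Mono f ∧ ∀ ⦃W : C⦄, P W → ∀ g : Y ⟶ W, Mono (f ≫ g) → Mono g

/-- A superfluous epimorphism, relative to the object class `P`. -/
def SupEpiOn (P : C → Prop) {X Y : C} (f : X ⟶ Y) : Prop :=
  Epi f ∧ ∀ ⦃W : C⦄, P W → ∀ g : W ⟶ X, Epi (g ≫ f) → Epi g

end AlmostSplit

/-- An almost split (Auslander-Reiten) sequence, relative to the object class `P` in an
ambient abelian category: a short exact sequence with terms in `P` whose left map is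
minimal left almost split and whose right map is minimal right almost split relative
to `P`. -/
def IsASSeqOn {C : Type uC} [Category.{vC} C] [Abelian C] (P : C → Prop)
    (S : ShortComplex C) : Prop :=
  S.ShortExact ∧ P S.X₁ ∧ P S.X₂ ∧ P S.X₃ ∧ MinLeftAS P S.f ∧ MinRightAS P S.g

variable (Q) in
/-- The morphism `P_y ⟶ P_x` determined by a path `p` from `x` to `y`
(composition with `p`). -/
noncomputable def projPathTrans {x y : Q} (p : Quiver.Path x y) :
    projRep k Q y ⟶ projRep k Q x :=
  liftNatTrans (fun z => ModuleCat.ofHom (Finsupp.lmapDomain k k (fun ρ : Quiver.Path y z => p.comp ρ))) (by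
    intro z w e
    apply ModuleCat.hom_ext
    show (Finsupp.lmapDomain k k _).comp (Finsupp.lmapDomain k k _) =
      (Finsupp.lmapDomain k k _).comp (Finsupp.lmapDomain k k _)
    rw [← Finsupp.lmapDomain_comp, ← Finsupp.lmapDomain_comp]
    rfl)

variable (Q) in
/-- The morphism `I_y ⟶ I_x` determined by a path `p` from `x` to `y`. -/
noncomputable def injPathTrans {x y : Q} (p : Quiver.Path x y) :
    injRep k Q y ⟶ injRep k Q x :=
  liftNatTrans (fun z => ModuleCat.ofHom (LinearMap.funLeft k k (fun σ : Quiver.Path z x => σ.comp p))) (by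
    intro z w e
    ext h
    funext σ
    show h ((Quiver.Hom.toPath e).comp (σ.comp p)) = h (((Quiver.Hom.toPath e).comp σ).comp p)
    rw [Quiver.Path.comp_assoc] <;> try rfl)

variable (Q) in
/-- The linear combination of path morphisms `P_y ⟶ P_x` determined by an element of the
span of the paths from `x` to `y`. -/
noncomputable def projCombTrans {x y : Q} (c : Quiver.Path x y →₀ k) :
    projRep k Q y ⟶ projRep k Q x :=
  c.sum (fun p cp => cp • projPathTrans k Q p)

variable (Q) in
/-- The linear combination of path morphisms `I_y ⟶ I_x` determined by an element of the
span of the paths from `x` to `y`. -/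
noncomputable def injCombTrans {x y : Q} (c : Quiver.Path x y →₀ k) :
    injRep k Q y ⟶ injRep k Q x :=
  c.sum (fun p cp => cp • injPathTrans k Q p)

variable (Q) in
/-- Evaluation of a morphism `P_y ⟶ P_x` on the trivial path, yielding an element of the
span of the paths from `x` to `y`. -/
noncomputable def evalProjHom {x y : Q} (u : projRep k Q y ⟶ projRep k Q x) :
    Quiver.Path x y →₀ k :=
  u.app (vtx y) (Finsupp.single Quiver.Path.nil 1)

open Classical in
variable (Q) in
/-- Evaluation of a morphism `I_y ⟶ I_x`, yielding an element of the span of the paths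
from `x` to `y` (here `Q` is interval-finite). -/
noncomputable def evalInjHom (hfin : ∀ x y : Q, Finite (Quiver.Path x y)) {x y : Q}
    (u : injRep k Q y ⟶ injRep k Q x) : Quiver.Path x y →₀ k :=
  haveI := hfin x y
  Finsupp.equivFunOnFinite.symm (fun p => u.app (vtx x) (Pi.single p 1) Quiver.Path.nil)

variable (Q) in
/-- The Nakayama functor `ν` applied to a morphism between objects of `proj(Q)` written as
finite direct sums of representations `P_a`; the value is the corresponding morphism between
the direct sums of the representations `I_a`. -/
noncomputable def nuMap {r s : ℕ} (xv : Fin r → Q) (yv : Fin s → Q)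
    (f : (⨁ fun j => projRep k Q (yv j)) ⟶ (⨁ fun i => projRep k Q (xv i))) :
    (⨁ fun j => injRep k Q (yv j)) ⟶ (⨁ fun i => injRep k Q (xv i)) :=
  biproduct.matrix fun j i =>
    injCombTrans k Q (evalProjHom k Q
      (biproduct.ι (fun j => projRep k Q (yv j)) j ≫ f ≫ biproduct.π (fun i => projRep k Q (xv i)) i))

variable (Q) in
/-- The inverse Nakayama functor `ν⁻` applied to a morphism between objects of `inj(Q)`
written as finite direct sums of representations `I_a`. -/
noncomputable def nuInvMap (hfin : ∀ x y : Q, Finite (Quiver.Path x y)) {r s : ℕ}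
    (xv : Fin r → Q) (yv : Fin s → Q)
    (g : (⨁ fun i => injRep k Q (xv i)) ⟶ (⨁ fun j => injRep k Q (yv j))) :
    (⨁ fun i => projRep k Q (xv i)) ⟶ (⨁ fun j => projRep k Q (yv j)) :=
  biproduct.matrix fun i j =>
    projCombTrans k Q (evalInjHom k Q hfin
      (biproduct.ι (fun i => injRep k Q (xv i)) i ≫ g ≫ biproduct.π (fun j => injRep k Q (yv j)) j))

variable (Q) in
/-- `0 → ⊕_j P_{y_j} → ⊕_i P_{x_i} → M → 0` is a minimal projective resolution:
a short exact sequence in which the two epimorphisms onto `M` and onto the kernel of `ε`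
are projective covers (superfluous epimorphisms). -/
structure IsMinProjRes (M : RepQ k Q) {r s : ℕ} (xv : Fin r → Q) (yv : Fin s → Q)
    (f : (⨁ fun j => projRep k Q (yv j)) ⟶ (⨁ fun i => projRep k Q (xv i)))
    (ε : (⨁ fun i => projRep k Q (xv i)) ⟶ M) : Prop where
  w : f ≫ ε = 0
  shortExact : (ShortComplex.mk f ε w).ShortExact
  superfluous_ε : SupEpiOn (fun _ => True) ε
  superfluous_f : SupEpiOn (fun _ => True) (kernel.lift ε f w)

variable (Q) in
/-- `0 → M → ⊕_i I_{x_i} → ⊕_j I_{y_j} → 0` is a minimal injective co-resolution: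
a short exact sequence in which the two monomorphisms from `M` and from the cokernel of `ι`
are injective hulls (essential monomorphisms). -/
structure IsMinInjCores (M : RepQ k Q) {r s : ℕ} (xv : Fin r → Q) (yv : Fin s → Q)
    (ι : M ⟶ (⨁ fun i => injRep k Q (xv i)))
    (g : (⨁ fun i => injRep k Q (xv i)) ⟶ (⨁ fun j => injRep k Q (yv j))) : Prop where
  w : ι ≫ g = 0
  shortExact : (ShortComplex.mk ι g w).ShortExact
  essential_ι : EssMonoOn (fun _ => True) ι
  essential_g : EssMonoOn (fun _ => True) (cokernel.desc ι g w)

variable (Q) in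
/-- `N` is an Auslander-Reiten translate `DTr M` of `M`: for some minimal projective
resolution `0 → P₁ → P₀ → M → 0` by finite direct sums of representations `P_a`,
the representation `N` is isomorphic to the kernel of `ν(f) : ν(P₁) ⟶ ν(P₀)`. -/
def IsDTrOf (N M : RepQ k Q) : Prop :=
  ∃ (r s : ℕ) (xv : Fin r → Q) (yv : Fin s → Q)
    (f : (⨁ fun j => projRep k Q (yv j)) ⟶ (⨁ fun i => projRep k Q (xv i)))
    (ε : (⨁ fun i => projRep k Q (xv i)) ⟶ M),
      IsMinProjRes k Q M xv yv f ε ∧ Nonempty (N ≅ kernel (nuMap k Q xv yv f))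

variable (Q) in
/-- `N` is an inverse Auslander-Reiten translate `TrD M` of `M`: for some minimal
injective co-resolution `0 → M → I₀ → I₁ → 0` by finite direct sums of representations
`I_a`, the representation `N` is isomorphic to the cokernel of `ν⁻(g) : ν⁻(I₀) ⟶ ν⁻(I₁)`. -/
def IsTrDOf (hfin : ∀ x y : Q, Finite (Quiver.Path x y)) (N M : RepQ k Q) : Prop :=
  ∃ (r s : ℕ) (xv : Fin r → Q) (yv : Fin s → Q)
    (ι : M ⟶ (⨁ fun i => injRep k Q (xv i)))
    (g : (⨁ fun i => injRep k Q (xv i)) ⟶ (⨁ fun j => injRep k Q (yv j))),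
      IsMinInjCores k Q M xv yv ι g ∧ Nonempty (N ≅ cokernel (nuInvMap k Q hfin xv yv g))

variable (Q) in
/-- `N ≅ DTr^n M`, where in particular all the intermediate translates are defined. -/
def IsDTrPow : ℕ → RepQ k Q → RepQ k Q → Prop
  | 0, N, M => Nonempty (N ≅ M)
  | n + 1, N, M => ∃ L : RepQ k Q, IsDTrPow n L M ∧ IsDTrOf k Q N L

variable (Q) in
/-- The quiver `Q` is connected: any two vertices are joined by a walk. -/
def QConnected : Prop :=
  ∀ x y : Q, Nonempty (Quiver.Path (a := (x : Quiver.Symmetrify Q)) (y : Quiver.Symmetrify Q))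

/-- `T` is a successor-closed subquiver of the full subquiver of `Q` generated by `S`. -/
def SuccClosedIn (T S : Set Q) : Prop :=
  T ⊆ S ∧ ∀ ⦃x y : Q⦄, (x ⟶ y) → x ∈ T → y ∈ S → y ∈ T

/-- The augmented complement of `T` in the full subquiver of `Q` generated by `S`: the
vertices of `S` not in `T` together with the endpoints of the arrows of `S` not lying in
the full subquiver generated by `T`. -/
def augComplement (T S : Set Q) : Set Q :=
  {z | z ∈ S ∧ z ∉ T} ∪
    {z | z ∈ S ∧ ∃ (x y : Q) (_ : x ⟶ y), x ∈ S ∧ y ∈ S ∧ ¬(x ∈ T ∧ y ∈ T) ∧ (z = x ∨ z = y)}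

/-!
Restriction to `Ω` is an additive functor, so all three statements follow once it is bijective
on morphisms between retracts of `M ⊕ N`; for that it suffices that it is injective on
`Hom(A, M ⊕ N)` and surjective on `End(M ⊕ N)`.

Faithfulness: `(M ⊕ N)_Σ` is a finite sum of representations `I_a ⊗ V`, in which every nonzero
element is carried by some path to a nonzero element at a vertex of the socle-support, and that
vertex lies in `Ω`. Hence a morphism `f` with `f_Ω = 0` satisfies `f_Σ = 0`, and `Q'` is
covered by `Σ ∪ Ω`.

Fullness: as `Ω` is successor-closed, `X_Ω` is a subrepresentation of `X`. Given
`h : X_Ω ⟶ Y_Ω`, the injectivity of `Y_Σ` extends `h_Σ` along `(X_Ω)_Σ ⊆ X_Σ` to some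
`g : X_Σ ⟶ Y_Σ`, and `h`, `g` glue to a morphism `X ⟶ Y` because, `Ω` containing the augmented
complement of `Σ`, every arrow of `Q'` lies either in `Ω` or in `Σ`.
-/

section PathCategory

variable {C : Type*} [Category C]

def natTransOfArrows {F G : Paths Q ⥤ C} (app : ∀ x : Q, F.obj (vtx x) ⟶ G.obj (vtx x))
    (naturality : ∀ ⦃x y : Q⦄ (e : x ⟶ y), F.map (arr e) ≫ app y = app x ≫ G.map (arr e)) :
    F ⟶ G where
  app x := app x
  naturality x y p := by
    induction p using Paths.induction_fixed_source with
    | id => simp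
    | comp p e ih =>
      rw [Functor.map_comp, Functor.map_comp, Category.assoc]
      erw [naturality e, reassoc_of% ih]
      rfl

def natIsoOfArrows {F G : Paths Q ⥤ C} (app : ∀ x : Q, F.obj (vtx x) ≅ G.obj (vtx x))
    (naturality : ∀ ⦃x y : Q⦄ (e : x ⟶ y),
      F.map (arr e) ≫ (app y).hom = (app x).hom ≫ G.map (arr e)) : F ≅ G :=
  NatIso.ofComponents app fun f => (natTransOfArrows (fun x => (app x).hom) naturality).naturality f

end PathCategory

section TransferAlongFunctor

variable {C D : Type*} [Category C] [Category D] (F : C ⥤ D)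

lemma map_injective_of_retract {A B Z : C} (hB : Retract B Z)
    (hinj : Function.Injective (F.map : (A ⟶ Z) → (F.obj A ⟶ F.obj Z))) :
    Function.Injective (F.map : (A ⟶ B) → (F.obj A ⟶ F.obj B)) := by
  intro f f' hff'
  have : f ≫ hB.i = f' ≫ hB.i := hinj (by rw [F.map_comp, F.map_comp, hff'])
  simpa using this =≫ hB.r

lemma map_surjective_of_retract {A B Z : C} (hA : Retract A Z) (hB : Retract B Z)
    (hsurj : Function.Surjective (F.map : (Z ⟶ Z) → (F.obj Z ⟶ F.obj Z))) :
    Function.Surjective (F.map : (A ⟶ B) → (F.obj A ⟶ F.obj B)) := by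
  intro g
  obtain ⟨f, hf⟩ := hsurj (F.map hA.r ≫ g ≫ F.map hB.i)
  refine ⟨hA.i ≫ f ≫ hB.r, ?_⟩
  simp only [F.map_comp, hf, Category.assoc]
  rw [← F.map_comp_assoc, hA.retract, F.map_id, Category.id_comp, ← F.map_comp, hB.retract,
    F.map_id, Category.comp_id]

lemma isSect_map {X Y : C} {f : X ⟶ Y} (hf : IsSect f) : IsSect (F.map f) := by
  obtain ⟨r, hr⟩ := hf
  exact ⟨F.map r, by rw [← F.map_comp, hr, F.map_id]⟩

lemma isRetr_map {X Y : C} {f : X ⟶ Y} (hf : IsRetr f) : IsRetr (F.map f) := by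
  obtain ⟨s, hs⟩ := hf
  exact ⟨F.map s, by rw [← F.map_comp, hs, F.map_id]⟩

lemma isSect_of_isSect_map {X Y : C} {f : X ⟶ Y}
    (hsurj : Function.Surjective (F.map : (Y ⟶ X) → (F.obj Y ⟶ F.obj X)))
    (hinj : Function.Injective (F.map : (X ⟶ X) → (F.obj X ⟶ F.obj X)))
    (hf : IsSect (F.map f)) : IsSect f := by
  obtain ⟨r, hr⟩ := hf
  obtain ⟨r, rfl⟩ := hsurj r
  exact ⟨r, hinj (by rw [F.map_comp, hr, F.map_id])⟩

lemma isRetr_of_isRetr_map {X Y : C} {f : X ⟶ Y}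
    (hsurj : Function.Surjective (F.map : (Y ⟶ X) → (F.obj Y ⟶ F.obj X)))
    (hinj : Function.Injective (F.map : (Y ⟶ Y) → (F.obj Y ⟶ F.obj Y)))
    (hf : IsRetr (F.map f)) : IsRetr f := by
  obtain ⟨s, hs⟩ := hf
  obtain ⟨s, rfl⟩ := hsurj s
  exact ⟨s, hinj (by rw [F.map_comp, hs, F.map_id])⟩

lemma nonempty_iso_of_map {X Y : C}
    (hXY : Function.Surjective (F.map : (X ⟶ Y) → (F.obj X ⟶ F.obj Y)))
    (hYX : Function.Surjective (F.map : (Y ⟶ X) → (F.obj Y ⟶ F.obj X)))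
    (hX : Function.Injective (F.map : (X ⟶ X) → (F.obj X ⟶ F.obj X)))
    (hY : Function.Injective (F.map : (Y ⟶ Y) → (F.obj Y ⟶ F.obj Y)))
    (e : F.obj X ≅ F.obj Y) : Nonempty (X ≅ Y) := by
  obtain ⟨f, hf⟩ := hXY e.hom
  obtain ⟨g, hg⟩ := hYX e.inv
  exact ⟨{ hom := f, inv := g
           hom_inv_id := hX (by simp [hf, hg])
           inv_hom_id := hY (by simp [hf, hg]) }⟩

lemma indec_iff_indec_map [Limits.HasZeroMorphisms C] [Limits.HasZeroMorphisms D]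
    [F.PreservesZeroMorphisms] {X : C}
    (hX : Function.Bijective (F.map : (X ⟶ X) → (F.obj X ⟶ F.obj X))) :
    Indec X ↔ Indec (F.obj X) := by
  have hzero : IsZero X ↔ IsZero (F.obj X) := by
    rw [IsZero.iff_id_eq_zero, IsZero.iff_id_eq_zero, ← F.map_id, ← F.map_zero,
      hX.injective.eq_iff]
  refine and_congr (not_congr hzero) ⟨fun hidem e he => ?_, fun hidem e he => ?_⟩
  · obtain ⟨e, rfl⟩ := hX.surjective e
    rcases hidem e (hX.injective (by rwa [F.map_comp])) with rfl | rfl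
    exacts [Or.inl (F.map_zero X X), Or.inr (F.map_id X)]
  · rcases hidem (F.map e) (by rw [← F.map_comp, he]) with h | h
    exacts [Or.inl (hX.injective (h.trans (F.map_zero X X).symm)),
      Or.inr (hX.injective (h.trans (F.map_id X).symm))]

end TransferAlongFunctor

section Restriction

variable {k}

lemma repHom_ext {M N : RepQ k Q} {f g : M ⟶ N}
    (h : ∀ (x : Q) (w : M.obj (vtx x)), f.app (vtx x) w = g.app (vtx x) w) : f = g :=
  NatTrans.ext (funext fun x => ModuleCat.hom_ext (LinearMap.ext (h x)))

open Classical in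
lemma restrictRep_map_arr_apply (M : RepQ k Q) (S : Set Q) {x y : Q} (e : x ⟶ y)
    (w : (restrictRep k Q M S).obj (vtx x)) (hy : PLift (y ∈ S)) :
    (restrictRep k Q M S).map (arr e) w hy =
      if hx : x ∈ S then M.map (arr e) (w ⟨hx⟩) else 0 := by
  show (Paths.lift (restrictPre k Q M S)).map (Quiver.Hom.toPath e) w hy = _
  rw [Paths.lift_toPath]
  rfl

lemma restrictRep_map_arr_const (M : RepQ k Q) {S : Set Q} {x y : Q} (e : x ⟶ y) (hx : x ∈ S)
    (v : M.obj (vtx x)) :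
    (restrictRep k Q M S).map (arr e) (fun _ => v) = fun _ => M.map (arr e) v := by
  funext hy
  exact (restrictRep_map_arr_apply M S e _ hy).trans (dif_pos hx)

variable (k Q) in
noncomputable def restrictFunctor (S : Set Q) : RepQ k Q ⥤ RepQ k Q where
  obj M := restrictRep k Q M S
  map f := restrictHom k Q f S

instance (S : Set Q) : (restrictFunctor k Q S).Additive where

/-- A morphism `M_S ⟶ N_S` has components `(x ∈ S → M(x)) → (x ∈ S → N(x))`; at a vertex
`x ∈ S` this is a linear map `M(x) → N(x)`. -/
noncomputable def restrictApp {M N : RepQ k Q} {S : Set Q}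
    (h : restrictRep k Q M S ⟶ restrictRep k Q N S) {x : Q} (hx : x ∈ S) :
    M.obj (vtx x) →ₗ[k] N.obj (vtx x) :=
  LinearMap.proj (⟨hx⟩ : PLift (x ∈ S)) ∘ₗ (h.app (vtx x)).hom ∘ₗ
    LinearMap.pi fun _ => LinearMap.id

section RestrictApp

variable {M N P : RepQ k Q} {S : Set Q}

lemma restrictApp_apply (h : restrictRep k Q M S ⟶ restrictRep k Q N S) {x : Q} (hx : x ∈ S)
    (v : M.obj (vtx x)) : restrictApp h hx v = h.app (vtx x) (fun _ => v) ⟨hx⟩ :=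
  rfl

lemma app_apply_eq_restrictApp (h : restrictRep k Q M S ⟶ restrictRep k Q N S) {x : Q}
    (w : (restrictRep k Q M S).obj (vtx x)) (hx : PLift (x ∈ S)) :
    h.app (vtx x) w hx = restrictApp h hx.down (w hx) := by
  obtain ⟨hx⟩ := hx
  exact congr_arg (fun w' => h.app (vtx x) w' ⟨hx⟩) rfl

lemma restrictRep_hom_ext {h h' : restrictRep k Q M S ⟶ restrictRep k Q N S}
    (H : ∀ (x : Q) (hx : x ∈ S), restrictApp h hx = restrictApp h' hx) : h = h' := by
  refine NatTrans.ext (funext fun (x : Q) => ?_)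
  ext w
  funext hx
  rw [app_apply_eq_restrictApp, app_apply_eq_restrictApp, H]

@[simp]
lemma restrictApp_restrictHom (f : M ⟶ N) {x : Q} (hx : x ∈ S) :
    restrictApp (restrictHom k Q f S) hx = (f.app (vtx x)).hom :=
  rfl

@[simp]
lemma restrictApp_zero {x : Q} (hx : x ∈ S) :
    restrictApp (0 : restrictRep k Q M S ⟶ restrictRep k Q N S) hx = 0 :=
  rfl

@[simp]
lemma restrictApp_comp (h : restrictRep k Q M S ⟶ restrictRep k Q N S)
    (h' : restrictRep k Q N S ⟶ restrictRep k Q P S) {x : Q} (hx : x ∈ S) :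
    restrictApp (h ≫ h') hx = restrictApp h' hx ∘ₗ restrictApp h hx := by
  ext v
  simp only [LinearMap.comp_apply, restrictApp_apply (h ≫ h'), NatTrans.comp_app]
  rfl

lemma restrictApp_naturality (h : restrictRep k Q M S ⟶ restrictRep k Q N S) {x y : Q}
    (e : x ⟶ y) (hx : x ∈ S) (hy : y ∈ S) (v : M.obj (vtx x)) :
    restrictApp h hy (M.map (arr e) v) = N.map (arr e) (restrictApp h hx v) := by
  have := congr_fun (NatTrans.naturality_apply h (arr e) (fun _ => v)) ⟨hy⟩
  rw [restrictRep_map_arr_const M e hx, restrictRep_map_arr_apply, dif_pos hx] at this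
  exact this

lemma restrictHom_eq_zero_iff (f : M ⟶ N) :
    restrictHom k Q f S = 0 ↔ ∀ x ∈ S, f.app (vtx x) = 0 := by
  refine ⟨fun hf x hx => ?_, fun hf => restrictRep_hom_ext fun x hx => ?_⟩
  · ext v
    simpa using congr(restrictApp $hf hx v)
  · simp [hf x hx]

end RestrictApp

end Restriction

section InjFunRep

variable {k}

/-- `I_a ⊗ V`, realised with value `Q(x, a) → V` at `x`. -/
noncomputable def injFunRep (a : Q) (V : ModuleCat.{0} k) : RepQ k Q :=
  Paths.lift
    { obj := fun x => ModuleCat.of k (Quiver.Path x a → V)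
      map := fun e => ModuleCat.ofHom (LinearMap.funLeft k V (fun σ => e.toPath.comp σ)) }

variable {a : Q} {V : ModuleCat.{0} k}

lemma injFunRep_map_arr_apply {x y : Q} (e : x ⟶ y) (t : (injFunRep a V).obj (vtx x))
    (σ : Quiver.Path y a) : (injFunRep a V).map (arr e) t σ = t (e.toPath.comp σ) := by
  have : (injFunRep a V).map (arr e) =
      ModuleCat.ofHom (LinearMap.funLeft k V fun σ : Quiver.Path y a => e.toPath.comp σ) :=
    Paths.lift_toPath _ _
  rw [this]
  rfl

lemma injFunRep_map_apply {x y : Q} (p : Quiver.Path x y) (t : (injFunRep a V).obj (vtx x))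
    (σ : Quiver.Path y a) : (injFunRep a V).map (pth p) t σ = t (p.comp σ) := by
  induction p with
  | nil =>
    erw [CategoryTheory.Functor.map_id]
    rw [Quiver.Path.nil_comp]
    rfl
  | cons p e ih =>
    rw [show pth (p.cons e) = pth p ≫ arr e from rfl, Functor.map_comp, ModuleCat.comp_apply,
      injFunRep_map_arr_apply, ih, ← Quiver.Path.comp_assoc]
    rfl

/-- The morphism `B ⟶ I_a ⊗ V` adjoint to a linear map `B(a) → V`. -/
noncomputable def injFunRepLift {B : RepQ k Q} (φ : B.obj (vtx a) →ₗ[k] V) :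
    B ⟶ injFunRep a V :=
  natTransOfArrows
    (fun x => ModuleCat.ofHom
      { toFun := fun w p => φ (B.map (pth p) w)
        map_add' := fun w w' => by ext; simp
        map_smul' := fun c w => by ext; simp })
    (fun x y e => by
      ext w
      refine funext fun (σ : Quiver.Path y a) => ?_
      show φ (B.map (pth σ) (B.map (arr e) w)) =
        (injFunRep a V).map (arr e) (fun p => φ (B.map (pth p) w)) σ
      erw [injFunRep_map_arr_apply]
      rw [← ModuleCat.comp_apply, ← Functor.map_comp]
      rfl)

lemma comp_injFunRepLift {A B : RepQ k Q} (j : A ⟶ B) (φ : B.obj (vtx a) →ₗ[k] V) :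
    j ≫ injFunRepLift φ = injFunRepLift (φ ∘ₗ (j.app (vtx a)).hom) := by
  refine repHom_ext fun x w => funext fun p => ?_
  show φ (B.map (pth p) (j.app (vtx x) w)) = φ (j.app (vtx a) (A.map (pth p) w))
  rw [NatTrans.naturality_apply]

lemma eq_injFunRepLift {B : RepQ k Q} (u : B ⟶ injFunRep a V) :
    u = injFunRepLift (LinearMap.proj Quiver.Path.nil ∘ₗ (u.app (vtx a)).hom) := by
  refine repHom_ext fun x w => funext fun p => ?_
  show u.app (vtx x) w p = u.app (vtx a) (B.map (pth p) w) Quiver.Path.nil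
  rw [NatTrans.naturality_apply, injFunRep_map_apply, Quiver.Path.comp_nil]

instance injective_injFunRep : Injective (injFunRep a V) where
  factors {A B} u j _ := by
    have hj : Function.Injective (j.app (vtx a)) :=
      (ModuleCat.mono_iff_injective _).1 inferInstance
    obtain ⟨r, hr⟩ := LinearMap.exists_leftInverse_of_injective (j.app (vtx a)).hom
      (LinearMap.ker_eq_bot.2 hj)
    refine ⟨injFunRepLift (LinearMap.proj Quiver.Path.nil ∘ₗ (u.app (vtx a)).hom ∘ₗ r), ?_⟩
    have hψ : (LinearMap.proj Quiver.Path.nil ∘ₗ (u.app (vtx a)).hom ∘ₗ r) ∘ₗ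
        (j.app (vtx a)).hom = LinearMap.proj Quiver.Path.nil ∘ₗ (u.app (vtx a)).hom :=
      LinearMap.ext fun v => congr_arg (fun w => u.app (vtx a) w Quiver.Path.nil)
        (LinearMap.congr_fun hr v)
    exact (comp_injFunRepLift j _).trans ((congr_arg injFunRepLift hψ).trans
      (eq_injFunRepLift u).symm)

open Classical in
/-- `(ι → k) ⊗ V ≅ (ι → V)` needs `ι` finite, hence interval-finiteness. -/
noncomputable def tensorInjRepIso (hfin : ∀ x y : Q, Finite (Quiver.Path x y)) (a : Q)
    (V : ModuleCat.{0} k) : tensorRep k (injRep k Q a) V ≅ injFunRep a V :=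
  natIsoOfArrows
    (fun x =>
      haveI := Fintype.ofFinite (Quiver.Path x a)
      ((TensorProduct.comm k _ V).trans
        (TensorProduct.piScalarRight k k V (Quiver.Path x a))).toModuleIso)
    (fun x y e => by
      apply ModuleCat.hom_ext
      refine TensorProduct.ext' fun f v => funext fun (σ : Quiver.Path y a) => ?_
      erw [injFunRep_map_arr_apply]
      rfl)

lemma injective_of_memInj (hfin : ∀ x y : Q, Finite (Quiver.Path x y)) {I : RepQ k Q}
    (hI : MemInj k Q I) : Injective I := by
  obtain ⟨n, a, V, ⟨e⟩⟩ := hI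
  exact Injective.of_iso (e ≪≫ biproduct.mapIso fun i => tensorInjRepIso hfin (a i) (V i)).symm
    inferInstance

end InjFunRep

section ReachesSocle

variable {k}

lemma mem_socle_iff {M : RepQ k Q} {x : Q} {s : M.obj (vtx x)} :
    s ∈ socle k Q M x ↔ ∀ (y : Q) (e : x ⟶ y), M.map (arr e) s = 0 := by
  simp only [socle, Submodule.mem_iInf, LinearMap.mem_ker]

lemma socle_ne_bot_of_injective {M N : RepQ k Q} (j : M ⟶ N) {a : Q}
    (hj : Function.Injective (j.app (vtx a))) (h : socle k Q M a ≠ ⊥) : socle k Q N a ≠ ⊥ := by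
  obtain ⟨s, hs, hs0⟩ := (Submodule.ne_bot_iff _).1 h
  refine (Submodule.ne_bot_iff _).2 ⟨j.app (vtx a) s, mem_socle_iff.2 fun y e => ?_,
    (map_ne_zero_iff _ hj).2 hs0⟩
  rw [← NatTrans.naturality_apply, mem_socle_iff.1 hs y e, map_zero]

variable (k Q) in
def ReachesSocle (M : RepQ k Q) : Prop :=
  ∀ ⦃x : Q⦄ (w : M.obj (vtx x)), w ≠ 0 →
    ∃ (a : Q) (p : Quiver.Path x a), socle k Q M a ≠ ⊥ ∧ M.map (pth p) w ≠ 0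

lemma ReachesSocle.exists_of_retract {I J : RepQ k Q} (h : Retract J I)
    (hJ : ReachesSocle k Q J) {x : Q} (w : I.obj (vtx x)) (hw : h.r.app (vtx x) w ≠ 0) :
    ∃ (a : Q) (p : Quiver.Path x a), socle k Q I a ≠ ⊥ ∧ I.map (pth p) w ≠ 0 := by
  obtain ⟨a, p, hsoc, hp⟩ := hJ _ hw
  refine ⟨a, p, socle_ne_bot_of_injective h.i ?_ hsoc, fun h0 => hp ?_⟩
  · exact (ModuleCat.mono_iff_injective _).1 inferInstance
  · rw [← NatTrans.naturality_apply, h0, map_zero]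

lemma ReachesSocle.of_iso {I J : RepQ k Q} (e : I ≅ J) (hJ : ReachesSocle k Q J) :
    ReachesSocle k Q I := fun _ w hw =>
  hJ.exists_of_retract ⟨e.inv, e.hom, e.inv_hom_id⟩ w
    ((map_ne_zero_iff _ ((ModuleCat.mono_iff_injective _).1 inferInstance)).2 hw)

lemma exists_biproduct_π_app_ne_zero {n : ℕ} {W : Fin n → RepQ k Q} {x : Q}
    {w : (⨁ W).obj (vtx x)} (hw : w ≠ 0) : ∃ i, (biproduct.π W i).app (vtx x) w ≠ 0 := by
  by_contra! h
  refine hw ?_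
  calc w = NatTrans.app (𝟙 (⨁ W)) (vtx x) w := rfl
    _ = NatTrans.app (∑ i, biproduct.π W i ≫ biproduct.ι W i : ⨁ W ⟶ ⨁ W) (vtx x) w := by
      rw [biproduct.total]
    _ = 0 := by
      rw [NatTrans.app_sum]
      change ModuleCat.Hom.hom _ w = 0
      rw [ModuleCat.hom_sum, LinearMap.coe_sum, Finset.sum_apply]
      exact Finset.sum_eq_zero fun i _ => by simp [h i]

lemma ReachesSocle.biproduct {n : ℕ} {W : Fin n → RepQ k Q} (hW : ∀ i, ReachesSocle k Q (W i)) :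
    ReachesSocle k Q (⨁ W) := fun _ w hw => by
  obtain ⟨i, hi⟩ := exists_biproduct_π_app_ne_zero hw
  exact (hW i).exists_of_retract ⟨biproduct.ι W i, biproduct.π W i, by simp⟩ w hi

lemma reachesSocle_injFunRep (a : Q) (V : ModuleCat.{0} k) :
    ReachesSocle k Q (injFunRep a V) := by
  classical
  intro x t ht
  obtain ⟨p, hp⟩ : ∃ p, t p ≠ 0 := by
    by_contra! h
    exact ht (funext h)
  refine ⟨a, p, (Submodule.ne_bot_iff _).2 ⟨Pi.single Quiver.Path.nil (t p), ?_, ?_⟩, ?_⟩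
  · refine mem_socle_iff.2 fun y e => funext fun σ => ?_
    erw [injFunRep_map_arr_apply]
    refine Pi.single_eq_of_ne (fun h => ?_) _
    simpa using congr_arg Quiver.Path.length h
  · intro h
    have := congr_fun h Quiver.Path.nil
    rw [Pi.single_eq_same] at this
    exact hp this
  · intro h
    have := congr_fun h Quiver.Path.nil
    rw [injFunRep_map_apply, Quiver.Path.comp_nil] at this
    exact hp this

lemma reachesSocle_of_memInj (hfin : ∀ x y : Q, Finite (Quiver.Path x y)) {I : RepQ k Q}
    (hI : MemInj k Q I) : ReachesSocle k Q I := by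
  obtain ⟨n, a, V, ⟨e⟩⟩ := hI
  exact .of_iso (e ≪≫ biproduct.mapIso fun i => tensorInjRepIso hfin (a i) (V i))
    (.biproduct fun i => reachesSocle_injFunRep (a i) (V i))

lemma eq_zero_of_app_eq_zero_of_socle_ne_bot {X I : RepQ k Q} (hI : ReachesSocle k Q I)
    (g : X ⟶ I) (hg : ∀ a, socle k Q I a ≠ ⊥ → g.app (vtx a) = 0) : g = 0 := by
  refine repHom_ext fun x v => by_contra fun hv => ?_
  obtain ⟨a, p, hsoc, hp⟩ := hI _ hv
  rw [← NatTrans.naturality_apply, hg a hsoc] at hp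
  exact hp rfl

end ReachesSocle

section RestrictionInclusion

variable {k}

lemma restrictRep_map_arr_eq_zero (M : RepQ k Q) {S : Set Q} {x y : Q} (e : x ⟶ y)
    (hx : x ∉ S) : (restrictRep k Q M S).map (arr e) = 0 := by
  ext w
  funext hy
  exact (restrictRep_map_arr_apply M S e w hy).trans (dif_neg hx)

open Classical in
noncomputable def restrictRepInclApp (M : RepQ k Q) (O : Set Q) (x : Q) :
    (restrictRep k Q M O).obj (vtx x) ⟶ M.obj (vtx x) :=
  if hx : x ∈ O then ModuleCat.ofHom (LinearMap.proj ⟨hx⟩) else 0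

lemma restrictRepInclApp_of_mem (M : RepQ k Q) {O : Set Q} {x : Q} (hx : x ∈ O) :
    restrictRepInclApp M O x = ModuleCat.ofHom (LinearMap.proj ⟨hx⟩) :=
  dif_pos hx

lemma restrictRepInclApp_of_not_mem (M : RepQ k Q) {O : Set Q} {x : Q} (hx : x ∉ O) :
    restrictRepInclApp M O x = 0 :=
  dif_neg hx

noncomputable def restrictRepIncl (M : RepQ k Q) {O : Set Q}
    (hO : ∀ ⦃x y : Q⦄, (x ⟶ y) → x ∈ O → y ∈ suppR k Q M → y ∈ O) :
    restrictRep k Q M O ⟶ M :=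
  natTransOfArrows (restrictRepInclApp M O)
    (fun x y e => by
      rcases subsingleton_or_nontrivial (M.obj (vtx y)) with hy | hy
      · ext w
        exact Subsingleton.elim _ _
      by_cases hx : x ∈ O
      · have hyO := hO e hx hy
        rw [restrictRepInclApp_of_mem M hx, restrictRepInclApp_of_mem M hyO]
        ext w
        exact (restrictRep_map_arr_apply M O e w ⟨hyO⟩).trans (dif_pos hx)
      · rw [restrictRepInclApp_of_not_mem M hx, restrictRep_map_arr_eq_zero M e hx, zero_comp,
          zero_comp])

lemma restrictRepIncl_app_apply (M : RepQ k Q) {O : Set Q}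
    (hO : ∀ ⦃x y : Q⦄, (x ⟶ y) → x ∈ O → y ∈ suppR k Q M → y ∈ O) {x : Q} (hx : x ∈ O)
    (w : (restrictRep k Q M O).obj (vtx x)) : (restrictRepIncl M hO).app (vtx x) w = w ⟨hx⟩ := by
  change (restrictRepInclApp M O x) w = _
  rw [restrictRepInclApp_of_mem M hx]
  rfl

instance (M : RepQ k Q) {O : Set Q}
    (hO : ∀ ⦃x y : Q⦄, (x ⟶ y) → x ∈ O → y ∈ suppR k Q M → y ∈ O) :
    Mono (restrictRepIncl M hO) := by
  have (x : Paths Q) : Mono ((restrictRepIncl M hO).app x) := by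
    refine (ModuleCat.mono_iff_injective _).2 fun w w' h => funext fun hx => ?_
    rwa [restrictRepIncl_app_apply (x := x) M hO hx.down,
      restrictRepIncl_app_apply (x := x) M hO hx.down] at h
  exact NatTrans.mono_of_mono_app _

end RestrictionInclusion

section RestrictionFullyFaithful

variable {k}

lemma diff_subset_of_augComplement_subset {S Q' O : Set Q} (haug : augComplement S Q' ⊆ O) :
    Q' \ S ⊆ O :=
  fun _ hx => haug (Or.inl hx)

lemma mem_of_augComplement_subset {S Q' O : Set Q} (haug : augComplement S Q' ⊆ O) {x y : Q}
    (e : x ⟶ y) (hx : x ∈ Q') (hy : y ∈ Q') (hxO : x ∉ O) : x ∈ S ∧ y ∈ S :=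
  of_not_not fun h => hxO (haug (Or.inr ⟨hx, x, y, e, hx, hy, h, Or.inl rfl⟩))

instance {M N : RepQ k Q} (f : M ⟶ N) [Mono f] (S : Set Q) : Mono (restrictHom k Q f S) := by
  have (x : Paths Q) : Mono ((restrictHom k Q f S).app x) := by
    have hf : Function.Injective (f.app x) := (ModuleCat.mono_iff_injective _).1 inferInstance
    exact (ModuleCat.mono_iff_injective _).2 fun w w' h => funext fun hx => hf (congr_fun h hx)
  exact NatTrans.mono_of_mono_app _

theorem restrictHom_injective {X Y : RepQ k Q} {Q' S O : Set Q} (hY : suppR k Q Y ⊆ Q')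
    (hYS : ReachesSocle k Q (restrictRep k Q Y S)) (hcover : Q' \ S ⊆ O)
    (hsoc : {x : Q | socle k Q (restrictRep k Q Y S) x ≠ ⊥} ⊆ O) :
    Function.Injective ((restrictFunctor k Q O).map : (X ⟶ Y) → _) := by
  refine (injective_iff_map_eq_zero (restrictFunctor k Q O).mapAddHom).2 fun f hf => ?_
  have hfO := (restrictHom_eq_zero_iff f).1 hf
  have hfS : restrictHom k Q f S = 0 :=
    eq_zero_of_app_eq_zero_of_socle_ne_bot hYS _ fun a ha => by
      ext w
      funext hx
      show f.app (vtx a) (w hx) = 0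
      rw [hfO a (hsoc ha)]
      rfl
  refine repHom_ext fun x v => ?_
  by_cases hxO : x ∈ O
  · rw [hfO x hxO]; rfl
  by_cases hxS : x ∈ S
  · rw [(restrictHom_eq_zero_iff f).1 hfS x hxS]; rfl
  have : ¬Nontrivial (Y.obj (vtx x)) := fun hx => hxO (hcover ⟨hY hx, hxS⟩)
  exact @Subsingleton.elim _ (not_nontrivial_iff_subsingleton.1 this) _ _

lemma exists_restrictHom_eq_of_agree {X Y : RepQ k Q} {Q' S O : Set Q}
    (hX : suppR k Q X ⊆ Q') (hY : suppR k Q Y ⊆ Q') (hO : SuccClosedIn O Q')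
    (haug : augComplement S Q' ⊆ O) (h : restrictRep k Q X O ⟶ restrictRep k Q Y O)
    (g : restrictRep k Q X S ⟶ restrictRep k Q Y S)
    (hgh : ∀ (x : Q) (hxO : x ∈ O) (hxS : x ∈ S), restrictApp g hxS = restrictApp h hxO) :
    ∃ f : X ⟶ Y, restrictHom k Q f O = h := by
  classical
  obtain ⟨fapp, hfO, hfS⟩ : ∃ fapp : ∀ x : Q, X.obj (vtx x) ⟶ Y.obj (vtx x),
      (∀ x (hx : x ∈ O), fapp x = ModuleCat.ofHom (restrictApp h hx)) ∧
      (∀ x (hx : x ∈ S), fapp x = ModuleCat.ofHom (restrictApp g hx)) := by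
    refine ⟨fun x => if hx : x ∈ O then ModuleCat.ofHom (restrictApp h hx)
      else if hx' : x ∈ S then ModuleCat.ofHom (restrictApp g hx') else 0,
      fun x hx => dif_pos hx, fun x hx => ?_⟩
    by_cases hxO : x ∈ O
    · simp only [dif_pos hxO, hgh x hxO hx]
    · simp only [dif_neg hxO, dif_pos hx]
  refine ⟨natTransOfArrows fapp fun x y e => ?_,
    restrictRep_hom_ext fun x hx => congr_arg ModuleCat.Hom.hom (hfO x hx)⟩
  rcases subsingleton_or_nontrivial (Y.obj (vtx y)) with hy | hy
  · ext w
    exact Subsingleton.elim _ _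
  rcases subsingleton_or_nontrivial (X.obj (vtx x)) with hx | hx
  · ext w
    rw [Subsingleton.elim w 0, map_zero, map_zero]
  by_cases hxO : x ∈ O
  · have hyO := hO.2 e hxO (hY hy)
    rw [hfO x hxO, hfO y hyO]
    ext v
    exact restrictApp_naturality h e hxO hyO v
  · obtain ⟨hxS, hyS⟩ := mem_of_augComplement_subset haug e (hX hx) (hY hy) hxO
    rw [hfS x hxS, hfS y hyS]
    ext v
    exact restrictApp_naturality g e hxS hyS v

theorem restrictHom_surjective {X Y : RepQ k Q} {Q' S O : Set Q}
    (hX : suppR k Q X ⊆ Q') (hY : suppR k Q Y ⊆ Q') (hYS : Injective (restrictRep k Q Y S))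
    (hO : SuccClosedIn O Q') (haug : augComplement S Q' ⊆ O) :
    Function.Surjective ((restrictFunctor k Q O).map : (X ⟶ Y) → _) := by
  intro (h : restrictRep k Q X O ⟶ restrictRep k Q Y O)
  have hOX : ∀ ⦃x y : Q⦄, (x ⟶ y) → x ∈ O → y ∈ suppR k Q X → y ∈ O :=
    fun _ _ e hx hy => hO.2 e hx (hX hy)
  have hOY : ∀ ⦃x y : Q⦄, (x ⟶ y) → x ∈ O → y ∈ suppR k Q Y → y ∈ O :=
    fun _ _ e hx hy => hO.2 e hx (hY hy)
  obtain ⟨g, hg⟩ : ∃ g, restrictHom k Q (restrictRepIncl X hOX) S ≫ g =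
      restrictHom k Q (h ≫ restrictRepIncl Y hOY) S :=
    ⟨_, Injective.comp_factorThru _ _⟩
  refine exists_restrictHom_eq_of_agree hX hY hO haug h g
    fun x hxO hxS => LinearMap.ext fun v => ?_
  have := congr(restrictApp $hg hxS (fun _ => v))
  simp only [restrictApp_comp, restrictApp_restrictHom] at this
  calc restrictApp g hxS v
      = restrictApp g hxS ((restrictRepIncl X hOX).app (vtx x) (fun _ => v)) :=
        congr_arg _ (restrictRepIncl_app_apply X hOX hxO (fun _ => v)).symm
    _ = (h ≫ restrictRepIncl Y hOY).app (vtx x) (fun _ => v) := this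
    _ = restrictApp h hxO v := restrictRepIncl_app_apply Y hOY hxO _

end RestrictionFullyFaithful

theorem statement_7_general (k : Type) [Field k] (Q : Type) [Quiver.{0} Q]
    (hQ : StronglyLocallyFinite Q) (Q' : Set Q) (M N : RepQ k Q)
    (Sig : Set Q)
    (hsupp : suppR k Q (M ⊞ N) ⊆ Q')
    (hinj : MemInj k Q (restrictRep k Q (M ⊞ N) Sig))
    (Om : Set Q) (hOm : SuccClosedIn Om Q')
    (hsoc : {x : Q | socle k Q (restrictRep k Q (M ⊞ N) Sig) x ≠ ⊥} ⊆ Om)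
    (haug : augComplement Sig Q' ⊆ Om) :
    (Nonempty (M ≅ N) ↔ Nonempty (restrictRep k Q M Om ≅ restrictRep k Q N Om)) ∧
    (Indec M ↔ Indec (restrictRep k Q M Om)) ∧
    (∀ f : M ⟶ N,
      (IsSect f ↔ IsSect (restrictHom k Q f Om)) ∧
      (IsRetr f ↔ IsRetr (restrictHom k Q f Om))) := by
  let F := restrictFunctor k Q Om
  have hfaithful (A : RepQ k Q) : Function.Injective (F.map : (A ⟶ M ⊞ N) → _) :=
    restrictHom_injective hsupp (reachesSocle_of_memInj hQ.2.2 hinj)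
      (diff_subset_of_augComplement_subset haug) hsoc
  have hfull : Function.Surjective (F.map : (M ⊞ N ⟶ M ⊞ N) → _) :=
    restrictHom_surjective hsupp hsupp (injective_of_memInj hQ.2.2 hinj) hOm haug
  have hbij {A B : RepQ k Q} (hA : Retract A (M ⊞ N)) (hB : Retract B (M ⊞ N)) :
      Function.Bijective (F.map : (A ⟶ B) → _) :=
    ⟨map_injective_of_retract F hB (hfaithful A), map_surjective_of_retract F hA hB hfull⟩
  let hM : Retract M (M ⊞ N) := ⟨biprod.inl, biprod.fst, biprod.inl_fst⟩
  let hN : Retract N (M ⊞ N) := ⟨biprod.inr, biprod.snd, biprod.inr_snd⟩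
  refine ⟨⟨fun ⟨e⟩ => ⟨F.mapIso e⟩, fun ⟨e⟩ => nonempty_iso_of_map F (hbij hM hN).2
    (hbij hN hM).2 (hbij hM hM).1 (hbij hN hN).1 e⟩, indec_iff_indec_map F (hbij hM hM),
    fun f => ⟨⟨isSect_map F, isSect_of_isSect_map F (hbij hN hM).2 (hbij hM hM).1⟩,
      ⟨isRetr_map F, isRetr_of_isRetr_map F (hbij hN hM).2 (hbij hN hN).1⟩⟩⟩

/-- Let `k` be a field, `Q` a strongly locally finite quiver and `Q'` a
full subquiver of `Q`. Let `M, N ∈ Rep^-(Q)` be such that `M ⊕ N` is supported by `Q'` and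
injective restricted to a full subquiver `Σ` of `Q'`, and let `Ω` be a successor-closed
subquiver of `Q'` containing the socle-support of `(M ⊕ N)_Σ` and the augmented complement
of `Σ` in `Q'`. Then: (1) `M ≅ N` iff `M_Ω ≅ N_Ω`; (2) `M` is indecomposable iff `M_Ω` is
indecomposable; (3) a morphism `f : M ⟶ N` is a section (resp. a retraction) iff
`f_Ω : M_Ω ⟶ N_Ω` is a section (resp. a retraction). -/
theorem statement_7 (k : Type) [Field k] (Q : Type) [Quiver.{0} Q]
    (hQ : StronglyLocallyFinite Q) (Q' : Set Q) (M N : RepQ k Q)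
    (hM : AlmostFinCopresented k Q M) (hN : AlmostFinCopresented k Q N)
    (Sig : Set Q) (hSig : Sig ⊆ Q')
    (hsupp : suppR k Q (M ⊞ N) ⊆ Q')
    (hinj : MemInj k Q (restrictRep k Q (M ⊞ N) Sig))
    (Om : Set Q) (hOm : SuccClosedIn Om Q')
    (hsoc : {x : Q | socle k Q (restrictRep k Q (M ⊞ N) Sig) x ≠ ⊥} ⊆ Om)
    (haug : augComplement Sig Q' ⊆ Om) :
    (Nonempty (M ≅ N) ↔ Nonempty (restrictRep k Q M Om ≅ restrictRep k Q N Om)) ∧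
    (Indec M ↔ Indec (restrictRep k Q M Om)) ∧
    (∀ f : M ⟶ N,
      (IsSect f ↔ IsSect (restrictHom k Q f Om)) ∧
      (IsRetr f ↔ IsRetr (restrictHom k Q f Om))) :=
  statement_7_general k Q hQ Q' M N Sig hsupp hinj Om hOm hsoc haug
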